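/- Let D ⊆ F = F^× × [q_1, …, q_s] be a seminormal finitely primary monoid of rank s. If s ≥ 2, then min L(a) = 2 for every a ∈ D ∖ (D^× ∪ A(D)), and the catenary degree satisfies c(D) = 3. -/

import Mathlib

/-!
Every non-unit of `D` has all exponents `≥ 1`, so an element with some exponent equal to `1` is
an atom, and a non-unit non-atom has all exponents `≥ 2`. Since `s ≥ 2`, such an element
`ε q^f` splits as `(ε q^g) · q^h` with `g + h = f`, where `g` and `h` equal `1` at two different
primes, so both factors are atoms. Hence every non-unit non-atom, in particular every product
of three atoms, is a product of two atoms. The first gives `min L(a) = 2`; the second lets us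
walk from any factorization to one of length `≤ 2` by steps of distance `≤ 3`, so `c(D) ≤ 3`.
Conversely, by cancellativity two factorizations of different lengths are at distance `≥ 3`:
after removing their common part, the remainders are factorizations of one element, and a
remainder of length `≤ 1` would force the other to equal it. As `(q_1 ⋯ q_s)^3` has
factorizations of lengths `3` and `2`, `c(D) ≥ 3`.
-/

namespace ArXivSeminormal

attribute [local instance] Classical.propDecidable

noncomputable section

/-! ### Generic factorization theory in commutative monoids -/

variable {M : Type*} [CommMonoid M]

/-- The set of factorizations of `a` (in the sense of `Z(a)`): multisets of irreducible
elements of the reduced monoid (modelled by `Associates M`) whose product is the class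
of `a`. -/
def Factorizations (a : M) : Set (Multiset (Associates M)) :=
  {z | (∀ x ∈ z, Irreducible x) ∧ z.prod = Associates.mk a}

/-- The set of lengths `L(a)` of an element `a`. -/
def lengthSet (a : M) : Set ℕ :=
  {k | ∃ z ∈ Factorizations a, Multiset.card z = k}

/-- The set of (successive) distances `Δ(L)` of a set `L ⊆ ℕ`. -/
def DeltaSet (L : Set ℕ) : Set ℕ :=
  {d | ∃ k l, k ∈ L ∧ l ∈ L ∧ k < l ∧ (∀ m, k < m → m < l → m ∉ L) ∧ d = l - k}

/-- The set of distances `Δ(H)` of a monoid `H`. -/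
def DeltaMonoid (M : Type*) [CommMonoid M] : Set ℕ :=
  ⋃ a : M, DeltaSet (lengthSet a)

/-- The distance between two factorizations:
`d(z,z') = max (card (z - gcd z z')) (card (z' - gcd z z'))`. -/
def factorDist (z z' : Multiset (Associates M)) : ℕ :=
  max (Multiset.card (z - z')) (Multiset.card (z' - z))

/-- The catenary degree `c(H)` of a monoid `H`: the smallest `N ∈ ℕ∞` such that any two
factorizations of any element are connected by a chain of factorizations with consecutive
distances at most `N`. -/
def catenaryDegree (M : Type*) [CommMonoid M] : ℕ∞ :=
  sInf {N : ℕ∞ | ∀ (a : M), ∀ z ∈ Factorizations a, ∀ z' ∈ Factorizations a,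
    ∃ c : List (Multiset (Associates M)), c.head? = some z ∧ c.getLast? = some z' ∧
      (∀ w ∈ c, w ∈ Factorizations a) ∧
      List.Chain' (fun u v => (factorDist u v : ℕ∞) ≤ N) c}

/-- A monoid is factorial if every element has a unique factorization. -/
def IsFactorialMonoid (M : Type*) [CommMonoid M] : Prop :=
  ∀ a : M, ∃! z : Multiset (Associates M), z ∈ Factorizations a

/-! ### Free commutative monoids, block monoids, Davenport constant -/

/-- The free abelian (multiplicatively written) monoid on a set `P`. -/
abbrev FreeCM (P : Type*) := Multiplicative (Multiset P)

/-- The sum homomorphism `σ : F(G) → G`. -/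
def sigmaHom (G : Type*) [AddCommMonoid G] : FreeCM G →* Multiplicative G :=
  AddMonoidHom.toMultiplicative
    { toFun := Multiset.sum
      map_zero' := Multiset.sum_zero
      map_add' := Multiset.sum_add }

/-- The monoid of zero-sum sequences over `G`. -/
def BlockMonoid (G : Type*) [AddCommMonoid G] : Submonoid (FreeCM G) :=
  MonoidHom.mker (sigmaHom G)

/-- The Davenport constant of `G`: the supremum of lengths of minimal zero-sum sequences. -/
def Davenport (G : Type*) [AddCommMonoid G] : ℕ :=
  sSup {k | ∃ u : BlockMonoid G, Irreducible u ∧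
    Multiset.card (Multiplicative.toAdd (u : FreeCM G)) = k}

/-! ### Reduced seminormal finitely primary monoids -/

/-- The `Fin s →₀ ℕ` function with all values `1`, i.e. the exponent vector of
`q_1 ⋯ q_s`. -/
def allOnes (s : ℕ) : Fin s →₀ ℕ := Finsupp.equivFunOnFinite.symm fun _ => 1

/-- The reduced seminormal finitely primary monoid of rank `s` with unit group `U` of the
complete integral closure:
`D = {ε q_1^{k_1} ⋯ q_s^{k_s} : ε ∈ U, all k_j ≥ 1} ∪ {1} ⊆ U × [q_1,…,q_s]`. -/
def seminormalD (U : Type*) [CommGroup U] (s : ℕ) :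
    Submonoid (U × Multiplicative (Fin s →₀ ℕ)) where
  carrier := {x | x = 1 ∨ ∀ j, 1 ≤ Multiplicative.toAdd x.2 j}
  one_mem' := Or.inl rfl
  mul_mem' := by
    rintro a b (rfl | ha) (rfl | hb)
    · exact Or.inl (mul_one 1)
    · rw [Set.mem_setOf_eq, one_mul]; exact Or.inr hb
    · rw [Set.mem_setOf_eq, mul_one]; exact Or.inr ha
    · refine Or.inr fun j => ?_
      have h1 := ha j
      have h2 := hb j
      have h3 : Multiplicative.toAdd ((a * b).2) j
          = Multiplicative.toAdd a.2 j + Multiplicative.toAdd b.2 j := rfl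
      omega

/-! ### T-block monoids (Setting (S)) -/

/-- The monoid `T = D_1 × ⋯ × D_n`. -/
abbrev Tm {n : ℕ} (U : Fin n → Type*) [∀ i, CommGroup (U i)] (s : Fin n → ℕ) :=
  ∀ i, ↥(seminormalD (U i) (s i))

/-- The monoid `D̂_1 × ⋯ × D̂_n`. -/
abbrev HatTm {n : ℕ} (U : Fin n → Type*) [∀ i, CommGroup (U i)] (s : Fin n → ℕ) :=
  ∀ i, U i × Multiplicative (Fin (s i) →₀ ℕ)

/-- The monoid `F = F(G) × T`. -/
abbrev Fm (G : Type*) {n : ℕ} (U : Fin n → Type*) [∀ i, CommGroup (U i)] (s : Fin n → ℕ) :=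
  FreeCM G × Tm U s

/-- The homomorphism `F → G`, `S·t ↦ σ(S) + ι(t)`, whose kernel is the `T`-block monoid;
it computes the class `[a] ∈ G ≅ q(F)/q(B)` of `a ∈ F`. -/
def TBlockPhi (G : Type*) [AddCommGroup G] {n : ℕ} (U : Fin n → Type*) [∀ i, CommGroup (U i)]
    (s : Fin n → ℕ) (iota : Tm U s →* Multiplicative G) : Fm G U s →* Multiplicative G :=
  ((sigmaHom G).comp (MonoidHom.fst _ _)) * (iota.comp (MonoidHom.snd _ _))

/-- The `T`-block monoid `B = B(G, T, ι) = {S·t ∈ F(G) × T : σ(S) + ι(t) = 0}`. -/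
def TBlock (G : Type*) [AddCommGroup G] {n : ℕ} (U : Fin n → Type*) [∀ i, CommGroup (U i)]
    (s : Fin n → ℕ) (iota : Tm U s →* Multiplicative G) : Submonoid (Fm G U s) :=
  MonoidHom.mker (TBlockPhi G U s iota)

/-- The inclusion `T = D_1 × ⋯ × D_n → D̂_1 × ⋯ × D̂_n`. -/
def embedT {n : ℕ} (U : Fin n → Type*) [∀ i, CommGroup (U i)] (s : Fin n → ℕ) :
    Tm U s →* HatTm U s :=
  Pi.monoidHom fun i => (seminormalD (U i) (s i)).subtype.comp
    (Pi.evalMonoidHom (fun j => ↥(seminormalD (U j) (s j))) i)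

/-- The norm `‖A‖ = k + 2·Σ_i max L_{D_i}(a_i)` of `A = g_1⋯g_k a_1⋯a_n ∈ F`. -/
def normF (G : Type*) {n : ℕ} (U : Fin n → Type*) [∀ i, CommGroup (U i)] (s : Fin n → ℕ)
    (A : Fm G U s) : ℕ :=
  Multiset.card (Multiplicative.toAdd A.1) + 2 * ∑ i, sSup (lengthSet (A.2 i))

/-- The class `[ε] ∈ G` of a unit `ε ∈ D̂_ν^×`. -/
def classOfUnit {G : Type*} [AddCommGroup G] {n : ℕ} (U : Fin n → Type*)
    [∀ i, CommGroup (U i)] (s : Fin n → ℕ) (iotahat : HatTm U s →* Multiplicative G)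
    (ν : Fin n) (ε : U ν) : Multiplicative G :=
  iotahat (Pi.mulSingle ν (ε, 1))

/-- The class `[q_{ν,j}] ∈ G` of the prime `q_{ν,j}` of `D̂_ν`. -/
def classOfPrime {G : Type*} [AddCommGroup G] {n : ℕ} (U : Fin n → Type*)
    [∀ i, CommGroup (U i)] (s : Fin n → ℕ) (iotahat : HatTm U s →* Multiplicative G)
    (ν : Fin n) (j : Fin (s ν)) : Multiplicative G :=
  iotahat (Pi.mulSingle ν (1, Multiplicative.ofAdd (Finsupp.single j 1)))

/-- The quantity `d_ν ∈ {-1, 0, 1, 2}` from Theorem 3.3 (for `G = {0, e}` of order two). -/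
def dval {G : Type*} [AddCommGroup G] {n : ℕ} (U : Fin n → Type*) [∀ i, CommGroup (U i)]
    (s : Fin n → ℕ) (iotahat : HatTm U s →* Multiplicative G) (e : G) (ν : Fin n) : ℤ :=
  if (∀ ε : U ν, classOfUnit U s iotahat ν ε = 1) ∧ s ν = 2 ∧
      (Finset.univ.filter fun j : Fin (s ν) =>
        classOfPrime U s iotahat ν j = Multiplicative.ofAdd e).card = 2 then 2
  else if (∀ ε : U ν, classOfUnit U s iotahat ν ε = 1) ∧ s ν = 1 then 0
  else if (∀ ε : U ν, classOfUnit U s iotahat ν ε = 1) ∧ 2 ≤ s ν ∧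
      (Finset.univ.filter fun j : Fin (s ν) =>
        classOfPrime U s iotahat ν j = Multiplicative.ofAdd e).card = 0 then -1
  else 1

section Factorizations

-- `Associates.irreducible_mk` is stated only for monoids with zero.
theorem irreducible_mk_iff {a : M} : Irreducible (Associates.mk a) ↔ Irreducible a := by
  refine ⟨fun h => ⟨fun ha => h.not_isUnit (Associates.isUnit_mk.2 ha), fun x y hxy => ?_⟩,
    fun h => ⟨fun ha => h.not_isUnit (Associates.isUnit_mk.1 ha), fun x y hxy => ?_⟩⟩
  · exact (h.isUnit_or_isUnit (by rw [hxy, Associates.mk_mul_mk])).imp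
      Associates.isUnit_mk.1 Associates.isUnit_mk.1
  · obtain ⟨x, rfl⟩ := Associates.mk_surjective x
    obtain ⟨y, rfl⟩ := Associates.mk_surjective y
    obtain ⟨u, hu⟩ := Associates.mk_eq_mk_iff_associated.1 (hxy.trans Associates.mk_mul_mk)
    simp only [Associates.isUnit_mk]
    refine (h.isUnit_or_isUnit (a := x) (b := y * ↑u⁻¹) ?_).imp id fun hy => ?_
    · rw [← mul_assoc, ← hu, Units.mul_inv_cancel_right]
    · simpa using hy.mul u.isUnit

theorem eq_zero_of_isUnit_prod {z : Multiset (Associates M)} (hz : ∀ x ∈ z, Irreducible x)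
    (h : IsUnit z.prod) : z = 0 :=
  Multiset.eq_zero_of_forall_notMem fun x hx =>
    (hz x hx).not_isUnit (isUnit_of_dvd_unit (Multiset.dvd_prod hx) h)

theorem isUnit_of_zero_mem_factorizations {a : M} (h : 0 ∈ Factorizations a) : IsUnit a :=
  Associates.isUnit_mk.1 (h.2 ▸ isUnit_one)

theorem irreducible_of_singleton_mem_factorizations {a : M} {t : Associates M}
    (h : {t} ∈ Factorizations a) : Irreducible a := by
  rw [← irreducible_mk_iff, ← h.2, Multiset.prod_singleton]
  exact h.1 t (Multiset.mem_singleton_self t)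

theorem eq_zero_of_mem_factorizations_of_isUnit {a : M} (ha : IsUnit a) {z}
    (hz : z ∈ Factorizations a) : z = 0 :=
  eq_zero_of_isUnit_prod hz.1 (hz.2 ▸ Associates.isUnit_mk.2 ha)

theorem eq_singleton_of_mem_factorizations_of_irreducible {a : M} (ha : Irreducible a) {z}
    (hz : z ∈ Factorizations a) : z = {Associates.mk a} := by
  obtain ⟨t, ht⟩ := Multiset.exists_mem_of_ne_zero fun h => ha.not_isUnit
    (isUnit_of_zero_mem_factorizations (h ▸ hz))
  obtain ⟨r, rfl⟩ := Multiset.exists_cons_of_mem ht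
  have hprod : Associates.mk a = t * r.prod := by rw [← hz.2, Multiset.prod_cons]
  have hr : r = 0 := by
    refine eq_zero_of_isUnit_prod (fun x hx => hz.1 x (Multiset.mem_cons_of_mem hx)) ?_
    exact ((irreducible_mk_iff.2 ha).isUnit_or_isUnit hprod).resolve_left (hz.1 t ht).not_isUnit
  rw [hr, Multiset.prod_zero, mul_one] at hprod
  rw [hr, hprod, Multiset.cons_zero]

theorem eq_of_mem_factorizations_of_card_le_one {a : M} {z z'} (hz : z ∈ Factorizations a)
    (hz' : z' ∈ Factorizations a) (h : Multiset.card z ≤ 1) : z' = z := by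
  obtain h | h := Nat.le_one_iff_eq_zero_or_eq_one.1 h
  · obtain rfl := Multiset.card_eq_zero.1 h
    exact eq_zero_of_mem_factorizations_of_isUnit (isUnit_of_zero_mem_factorizations hz) hz'
  · obtain ⟨t, rfl⟩ := Multiset.card_eq_one.1 h
    have ha := irreducible_of_singleton_mem_factorizations hz
    rw [eq_singleton_of_mem_factorizations_of_irreducible ha hz',
      eq_singleton_of_mem_factorizations_of_irreducible ha hz]

theorem two_le_card_of_mem_factorizations {a : M} (hu : ¬IsUnit a) (hi : ¬Irreducible a) {z}
    (hz : z ∈ Factorizations a) : 2 ≤ Multiset.card z := by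
  by_contra! h
  obtain h | h := Nat.le_one_iff_eq_zero_or_eq_one.1 (Nat.lt_succ_iff.1 h)
  · exact hu (isUnit_of_zero_mem_factorizations (Multiset.card_eq_zero.1 h ▸ hz))
  · obtain ⟨t, rfl⟩ := Multiset.card_eq_one.1 h
    exact hi (irreducible_of_singleton_mem_factorizations hz)

theorem map_mk_mem_factorizations {z : Multiset M} (hz : ∀ x ∈ z, Irreducible x) :
    z.map Associates.mk ∈ Factorizations z.prod :=
  ⟨Multiset.forall_mem_map_iff.2 fun x hx => irreducible_mk_iff.2 (hz x hx), Associates.prod_mk⟩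

theorem pair_mem_factorizations {b c : M} (hb : Irreducible b) (hc : Irreducible c) :
    {Associates.mk b, Associates.mk c} ∈ Factorizations (b * c) := by
  simpa using map_mk_mem_factorizations (z := {b, c}) (by simp [hb, hc])

theorem sInf_lengthSet_mul_eq_two {b c : M} (hb : Irreducible b) (hc : Irreducible c) :
    sInf (lengthSet (b * c)) = 2 := by
  refine IsLeast.csInf_eq ⟨⟨_, pair_mem_factorizations hb hc, rfl⟩, ?_⟩
  rintro _ ⟨z, hz, rfl⟩
  refine two_le_card_of_mem_factorizations (fun h => hb.not_isUnit (isUnit_of_mul_isUnit_left h))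
    (fun h => ?_) hz
  exact (h.isUnit_or_isUnit rfl).elim hb.not_isUnit hc.not_isUnit

theorem add_mem_factorizations_of_prod_eq {a : M} {t t' w : Multiset (Associates M)}
    (h : t + w ∈ Factorizations a) (ht' : ∀ x ∈ t', Irreducible x) (hprod : t'.prod = t.prod) :
    t' + w ∈ Factorizations a := by
  refine ⟨fun x hx => (Multiset.mem_add.1 hx).elim (ht' x) fun hw => ?_, ?_⟩
  · exact h.1 x (Multiset.mem_add.2 (Or.inr hw))
  · rw [Multiset.prod_add, hprod, ← Multiset.prod_add, h.2]

theorem factorDist_add_right (t t' w : Multiset (Associates M)) :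
    factorDist (t + w) (t' + w) = factorDist t t' := by
  simp only [factorDist, add_tsub_add_eq_tsub_right]

theorem factorDist_le_max_card (z z' : Multiset (Associates M)) :
    factorDist z z' ≤ max (Multiset.card z) (Multiset.card z') :=
  max_le_max (Multiset.card_le_card tsub_le_self) (Multiset.card_le_card tsub_le_self)

theorem exists_eq_add_of_three_le_card {α : Type*} {z : Multiset α}
    (h : 3 ≤ Multiset.card z) : ∃ x y w r, z = {x, y, w} + r := by
  obtain ⟨l⟩ := z
  match l, h with
  | x :: y :: w :: r, _ => exact ⟨x, y, w, r, by simp⟩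

end Factorizations

section CatenaryDegree

def FactorizationStep (a : M) (N : ℕ∞) (u v : Multiset (Associates M)) : Prop :=
  u ∈ Factorizations a ∧ v ∈ Factorizations a ∧ (factorDist u v : ℕ∞) ≤ N

theorem exists_chain_iff_reflTransGen {a : M} {N : ℕ∞} {z z' : Multiset (Associates M)}
    (hz : z ∈ Factorizations a) :
    (∃ c : List (Multiset (Associates M)), c.head? = some z ∧ c.getLast? = some z' ∧
      (∀ w ∈ c, w ∈ Factorizations a) ∧ List.IsChain (fun u v => (factorDist u v : ℕ∞) ≤ N) c) ↔
      Relation.ReflTransGen (FactorizationStep a N) z z' := by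
  constructor
  · rintro ⟨c, hhead, hlast, hmem, hchain⟩
    obtain ⟨l, rfl⟩ := List.head?_eq_some_iff.1 hhead
    refine List.relationReflTransGen_of_exists_isChain_cons l
      (hchain.imp_of_mem_imp fun u v hu hv h => ⟨hmem u hu, hmem v hv, h⟩) ?_
    exact Option.some_injective _ ((List.getLast?_eq_some_getLast _).symm.trans hlast)
  · intro h
    obtain ⟨l, hchain, hlast⟩ := List.exists_isChain_cons_of_relationReflTransGen h
    refine ⟨z :: l, rfl, by rw [List.getLast?_eq_some_getLast (List.cons_ne_nil _ _), hlast], ?_,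
      hchain.imp fun u v h => h.2.2⟩
    exact hchain.induction (· ∈ Factorizations a) _ (fun _ _ h _ => h.2.1) fun _ => hz

theorem catenaryDegree_eq_sInf_reflTransGen : catenaryDegree M = sInf {N : ℕ∞ |
    ∀ a : M, ∀ z ∈ Factorizations a, ∀ z' ∈ Factorizations a,
      Relation.ReflTransGen (FactorizationStep a N) z z'} := by
  unfold catenaryDegree
  congr! with N a z hz z' _
  exact exists_chain_iff_reflTransGen hz

theorem exists_reflTransGen_card_le_two
    (h3 : ∀ x y w : M, Irreducible x → Irreducible y → Irreducible w →
      ∃ b c, Irreducible b ∧ Irreducible c ∧ x * y * w = b * c)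
    {a : M} {z : Multiset (Associates M)} (hz : z ∈ Factorizations a) :
    ∃ z', z' ∈ Factorizations a ∧ Multiset.card z' ≤ 2 ∧
      Relation.ReflTransGen (FactorizationStep a 3) z z' := by
  induction hn : Multiset.card z using Nat.strong_induction_on generalizing z with
  | _ n ih =>
  by_cases hle : Multiset.card z ≤ 2
  · exact ⟨z, hz, hle, .refl⟩
  obtain ⟨x, y, w, r, rfl⟩ := exists_eq_add_of_three_le_card (by omega : 3 ≤ Multiset.card z)
  have hatom : ∀ t ∈ ({x, y, w} : Multiset _), Irreducible t :=
    fun t ht => hz.1 t (Multiset.mem_add.2 (Or.inl ht))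
  obtain ⟨x, rfl⟩ := Associates.mk_surjective x
  obtain ⟨y, rfl⟩ := Associates.mk_surjective y
  obtain ⟨w, rfl⟩ := Associates.mk_surjective w
  simp only [Multiset.insert_eq_cons, Multiset.forall_mem_cons, Multiset.mem_singleton,
    forall_eq, irreducible_mk_iff] at hatom
  obtain ⟨b, c, hb, hc, hbc⟩ := h3 x y w hatom.1 hatom.2.1 hatom.2.2
  have hz' : {Associates.mk b, Associates.mk c} + r ∈ Factorizations a := by
    refine add_mem_factorizations_of_prod_eq hz ?_ ?_
    · simpa [irreducible_mk_iff] using ⟨hb, hc⟩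
    · simp [Associates.mk_mul_mk, ← hbc, mul_assoc]
  have hstep : FactorizationStep a 3 ({Associates.mk x, Associates.mk y, Associates.mk w} + r)
      ({Associates.mk b, Associates.mk c} + r) := by
    refine ⟨hz, hz', ?_⟩
    have := factorDist_le_max_card {Associates.mk x, Associates.mk y, Associates.mk w}
      {Associates.mk b, Associates.mk c}
    simp only [Multiset.insert_eq_cons, Multiset.card_cons, Multiset.card_singleton] at this
    rw [factorDist_add_right]
    exact_mod_cast this.trans (by simp)
  obtain ⟨z', hz'mem, hz'card, hrtg⟩ := ih _ (by simp [← hn]) hz' rfl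
  exact ⟨z', hz'mem, hz'card, .head hstep hrtg⟩

theorem catenaryDegree_le_three
    (h3 : ∀ x y w : M, Irreducible x → Irreducible y → Irreducible w →
      ∃ b c, Irreducible b ∧ Irreducible c ∧ x * y * w = b * c) :
    catenaryDegree M ≤ 3 := by
  rw [catenaryDegree_eq_sInf_reflTransGen]
  refine sInf_le fun a z hz z' hz' => ?_
  obtain ⟨y, hy, hycard, hzy⟩ := exists_reflTransGen_card_le_two h3 hz
  obtain ⟨y', hy', hy'card, hzy'⟩ := exists_reflTransGen_card_le_two h3 hz'
  have hyy' : FactorizationStep a 3 y y' :=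
    ⟨hy, hy', by exact_mod_cast (factorDist_le_max_card y y').trans (by omega)⟩
  have hsymm : ∀ u v, FactorizationStep a 3 v u → FactorizationStep a 3 u v :=
    fun u v h => ⟨h.2.1, h.1, by rw [factorDist, max_comm]; exact h.2.2⟩
  exact hzy.trans (.head hyy' (Relation.ReflTransGen.mono hsymm _ _
    (Relation.reflTransGen_swap.2 hzy')))

section Cancel

variable [IsLeftCancelMul M]

instance : IsLeftCancelMul (Associates M) where
  mul_left_cancel a b c h := by
    obtain ⟨a, rfl⟩ := Associates.mk_surjective a
    obtain ⟨b, rfl⟩ := Associates.mk_surjective b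
    obtain ⟨c, rfl⟩ := Associates.mk_surjective c
    simp only [Associates.mk_mul_mk, Associates.mk_eq_mk_iff_associated] at h ⊢
    obtain ⟨u, hu⟩ := h
    exact ⟨u, mul_left_cancel (a := a) (by rw [← mul_assoc, hu])⟩

theorem three_le_factorDist {a : M} {z z' : Multiset (Associates M)}
    (hz : z ∈ Factorizations a) (hz' : z' ∈ Factorizations a)
    (hne : Multiset.card z ≠ Multiset.card z') : 3 ≤ factorDist z z' := by
  have hsplit : z - z' + z ∩ z' = z := Multiset.sub_add_inter z z'
  have hsplit' : z' - z + z ∩ z' = z' := by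
    rw [Multiset.inter_comm]; exact Multiset.sub_add_inter z' z
  have hprod : (z - z').prod = (z' - z).prod := mul_left_cancel (a := (z ∩ z').prod) <| by
    rw [← Multiset.prod_add, ← Multiset.prod_add, add_comm, hsplit, add_comm, hsplit', hz.2,
      hz'.2]
  obtain ⟨b, hb⟩ := Associates.mk_surjective (z - z').prod
  have hv : z - z' ∈ Factorizations b :=
    ⟨fun x hx => hz.1 x (Multiset.mem_of_le tsub_le_self hx), hb.symm⟩
  have hw : z' - z ∈ Factorizations b :=
    ⟨fun x hx => hz'.1 x (Multiset.mem_of_le tsub_le_self hx), hb ▸ hprod.symm⟩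
  have hcard : Multiset.card (z - z') ≠ Multiset.card (z' - z) := by
    have h := congrArg Multiset.card hsplit
    have h' := congrArg Multiset.card hsplit'
    rw [Multiset.card_add] at h h'
    omega
  have hv2 : 2 ≤ Multiset.card (z - z') := by
    by_contra! h
    exact hcard (congrArg _ (eq_of_mem_factorizations_of_card_le_one hv hw (by omega))).symm
  have hw2 : 2 ≤ Multiset.card (z' - z) := by
    by_contra! h
    exact hcard (congrArg _ (eq_of_mem_factorizations_of_card_le_one hw hv (by omega)))
  simp only [factorDist, le_max_iff]
  omega

theorem card_eq_of_reflTransGen {a : M} {N : ℕ∞} (hN : N < 3) {z z' : Multiset (Associates M)}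
    (h : Relation.ReflTransGen (FactorizationStep a N) z z') :
    Multiset.card z = Multiset.card z' := by
  induction h with
  | refl => rfl
  | tail _ hstep ih =>
    refine ih.trans (by_contra fun hne => hN.not_ge ?_)
    exact le_trans (by exact_mod_cast three_le_factorDist hstep.1 hstep.2.1 hne) hstep.2.2

theorem three_le_catenaryDegree {a : M} {z z' : Multiset (Associates M)}
    (hz : z ∈ Factorizations a) (hz' : z' ∈ Factorizations a)
    (hne : Multiset.card z ≠ Multiset.card z') : 3 ≤ catenaryDegree M := by
  rw [catenaryDegree_eq_sInf_reflTransGen]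
  exact le_sInf fun N hN => not_lt.1 fun hN3 =>
    hne (card_eq_of_reflTransGen hN3 (hN a z hz z' hz'))

end Cancel

end CatenaryDegree

theorem exists_add_eq_of_two_le {ι : Type*} [Finite ι] {f : ι →₀ ℕ} (hf : ∀ j, 2 ≤ f j)
    {i i' : ι} (hii' : i ≠ i') :
    ∃ g h : ι →₀ ℕ, g + h = f ∧ (∀ j, 1 ≤ g j) ∧ (∀ j, 1 ≤ h j) ∧ g i' = 1 ∧ h i = 1 := by
  refine ⟨Finsupp.equivFunOnFinite.symm fun j => if j = i then f j - 1 else 1,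
    Finsupp.equivFunOnFinite.symm fun j => if j = i then 1 else f j - 1, ?_, fun j => ?_,
    fun j => ?_, by simp [hii'.symm], by simp⟩
  · ext j
    have := hf j
    simp only [Finsupp.add_apply, Finsupp.coe_equivFunOnFinite_symm]
    split_ifs <;> omega
  all_goals
    have := hf j
    simp only [Finsupp.coe_equivFunOnFinite_symm]
    split_ifs <;> omega

section SeminormalFinitelyPrimary

variable {U : Type*} [CommGroup U] {s : ℕ} {D : Submonoid (U × Multiplicative (Fin s →₀ ℕ))}

def exponent (x : D) (j : Fin s) : ℕ :=
  Multiplicative.toAdd (x : U × Multiplicative (Fin s →₀ ℕ)).2 j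

@[simp]
theorem exponent_mul (x y : D) (j : Fin s) :
    exponent (x * y) j = exponent x j + exponent y j :=
  rfl

theorem exponent_eq_zero_of_isUnit {x : D} (hx : IsUnit x) (j : Fin s) : exponent x j = 0 := by
  obtain ⟨y, hxy⟩ := hx.exists_right_inv
  have h : exponent x j + exponent y j = 0 := by rw [← exponent_mul, hxy]; rfl
  omega

variable (hprimary : ∀ x : D, ¬IsUnit x → ∀ j, 1 ≤ exponent x j)
include hprimary

theorem irreducible_of_exponent_eq_one {x : D} {j : Fin s} (hj : exponent x j = 1) :
    Irreducible x := by
  refine ⟨fun hx => by simp [exponent_eq_zero_of_isUnit hx] at hj, fun b c hbc => ?_⟩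
  by_contra! h
  have hb := hprimary b h.1 j
  have hc := hprimary c h.2 j
  rw [hbc, exponent_mul] at hj
  omega

variable (hD : ∀ x : U × Multiplicative (Fin s →₀ ℕ), (∀ j, 1 ≤ Multiplicative.toAdd x.2 j) → x ∈ D)
include hD

theorem exists_irreducible (hs : 0 < s) : ∃ t : D, Irreducible t := by
  have hones : ∀ j, 1 ≤ Multiplicative.toAdd (Multiplicative.ofAdd (allOnes s)) j := by
    simp [allOnes]
  exact ⟨⟨(1, Multiplicative.ofAdd (allOnes s)), hD _ hones⟩,
    irreducible_of_exponent_eq_one hprimary (j := ⟨0, hs⟩) (by simp [exponent, allOnes])⟩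

theorem exists_irreducible_mul_eq_of_two_le_exponent (hs : 2 ≤ s) {x : D}
    (hx : ∀ j, 2 ≤ exponent x j) : ∃ b c : D, Irreducible b ∧ Irreducible c ∧ b * c = x := by
  obtain ⟨i, i', hii'⟩ := (Fin.nontrivial_iff_two_le.2 hs).exists_pair_ne
  obtain ⟨g, h, hgh, hg, hh, hgi', hhi⟩ := exists_add_eq_of_two_le hx hii'
  refine ⟨⟨((x : U × Multiplicative (Fin s →₀ ℕ)).1, .ofAdd g), hD _ hg⟩,
    ⟨(1, .ofAdd h), hD _ hh⟩,
    irreducible_of_exponent_eq_one hprimary hgi', irreducible_of_exponent_eq_one hprimary hhi, ?_⟩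
  refine Subtype.ext (Prod.ext (mul_one _) ?_)
  change Multiplicative.ofAdd (g + h) = _
  rw [hgh]
  rfl

theorem exists_irreducible_mul_eq_of_not_irreducible (hs : 2 ≤ s) {x : D} (hu : ¬IsUnit x)
    (hi : ¬Irreducible x) : ∃ b c : D, Irreducible b ∧ Irreducible c ∧ b * c = x := by
  refine exists_irreducible_mul_eq_of_two_le_exponent hprimary hD hs fun j => ?_
  have := hprimary x hu j
  by_contra! h
  exact hi (irreducible_of_exponent_eq_one hprimary (by omega : exponent x j = 1))

theorem exists_irreducible_mul_eq_mul_mul (hs : 2 ≤ s) (x y w : D) (hx : Irreducible x)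
    (hy : Irreducible y) (hw : Irreducible w) :
    ∃ b c : D, Irreducible b ∧ Irreducible c ∧ x * y * w = b * c := by
  obtain ⟨b, c, hb, hc, hbc⟩ :=
    exists_irreducible_mul_eq_of_two_le_exponent hprimary hD hs (x := x * y * w) fun j => by
      have := hprimary x hx.not_isUnit j
      have := hprimary y hy.not_isUnit j
      have := hprimary w hw.not_isUnit j
      simp only [exponent_mul]
      omega
  exact ⟨b, c, hb, hc, hbc.symm⟩

end SeminormalFinitelyPrimary

theorem rank_ge_two_seminormal_finitely_primary_general
    {U : Type*} [CommGroup U] {s : ℕ} (hs : 2 ≤ s)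
    (D : Submonoid (U × Multiplicative (Fin s →₀ ℕ)))
    (hprimary : ∀ x : D, ¬ IsUnit x →
      ∀ j, 1 ≤ Multiplicative.toAdd (x : U × Multiplicative (Fin s →₀ ℕ)).2 j)
    (hseminormal : (D : Set (U × Multiplicative (Fin s →₀ ℕ))) =
      {x : U × Multiplicative (Fin s →₀ ℕ) | ∀ j, 1 ≤ Multiplicative.toAdd x.2 j} ∪
        {x : U × Multiplicative (Fin s →₀ ℕ) | ∃ h : x ∈ D, IsUnit (⟨x, h⟩ : D)}) :
    (∀ a : D, ¬ IsUnit a → ¬ Irreducible a → sInf (lengthSet a) = 2) ∧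
      catenaryDegree ↥D = 3 := by
  have hD : ∀ x : U × Multiplicative (Fin s →₀ ℕ), (∀ j, 1 ≤ Multiplicative.toAdd x.2 j) →
      x ∈ D := fun x hx => (hseminormal.symm ▸ Or.inl hx : x ∈ (D : Set _))
  have h3 := exists_irreducible_mul_eq_mul_mul hprimary hD hs
  refine ⟨fun a hu hi => ?_, le_antisymm (catenaryDegree_le_three h3) ?_⟩
  · obtain ⟨b, c, hb, hc, rfl⟩ :=
      exists_irreducible_mul_eq_of_not_irreducible hprimary hD hs hu hi
    exact sInf_lengthSet_mul_eq_two hb hc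
  · obtain ⟨t, ht⟩ := exists_irreducible hprimary hD (by omega)
    obtain ⟨b, c, hb, hc, hbc⟩ := h3 t t t ht ht ht
    have htriple := map_mk_mem_factorizations (z := {t, t, t}) (by simp [ht])
    simp only [Multiset.insert_eq_cons, Multiset.prod_cons, Multiset.prod_singleton, ← mul_assoc,
      hbc] at htriple
    exact three_le_catenaryDegree htriple (pair_mem_factorizations hb hc) (by simp)

/-- Lemma 2.1(3): in a seminormal finitely primary monoid of rank `s ≥ 2`, every
non-unit non-atom has minimal factorization length `2`; in particular the catenary
degree equals `3`. -/
theorem rank_ge_two_seminormal_finitely_primary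
    {U : Type*} [CommGroup U] {s : ℕ} (hs : 2 ≤ s)
    (D : Submonoid (U × Multiplicative (Fin s →₀ ℕ)))
    (hprimary : ∀ x : D, ¬ IsUnit x →
      ∀ j, 1 ≤ Multiplicative.toAdd (x : U × Multiplicative (Fin s →₀ ℕ)).2 j)
    (hconductor : ∃ α : ℕ, 1 ≤ α ∧ ∀ y : U × Multiplicative (Fin s →₀ ℕ),
      ((1 : U), Multiplicative.ofAdd (allOnes s)) ^ α * y ∈ D)
    (hseminormal : (D : Set (U × Multiplicative (Fin s →₀ ℕ))) =
      {x : U × Multiplicative (Fin s →₀ ℕ) | ∀ j, 1 ≤ Multiplicative.toAdd x.2 j} ∪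
        {x : U × Multiplicative (Fin s →₀ ℕ) | ∃ h : x ∈ D, IsUnit (⟨x, h⟩ : D)}) :
    (∀ a : D, ¬ IsUnit a → ¬ Irreducible a → sInf (lengthSet a) = 2) ∧
      catenaryDegree ↥D = 3 :=
  rank_ge_two_seminormal_finitely_primary_general hs D hprimary hseminormal

end
end ArXivSeminormal
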